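/- (Monotonicity of the optimal trace ratio) Let B be symmetric and W symmetric positive definite, both p x p. For 1 <= k <= p, define rho^(k) = max over p x k matrices V with V^T V = I_k of tr(V^T B V)/tr(V^T W V). Then rho^(k) is a non-increasing function of k, i.e., rho^(k+1) <= rho^(k) for all 1 <= k <= p-1. -/

import Mathlib

open Matrix

/-!
Let `V` attain `ρ(k+1)`. Deleting column `j` of `V` leaves orthonormal columns, so the
deleted matrix `Vⱼ` satisfies `tr(Vⱼᵀ B Vⱼ) ≤ ρ(k) tr(Vⱼᵀ W Vⱼ)`. Summing over the `k + 1`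
choices of `j` counts every diagonal entry of `Vᵀ B V` and of `Vᵀ W V` exactly `k` times, so
`k tr(Vᵀ B V) ≤ k ρ(k) tr(Vᵀ W V)`, which is `ρ(k+1) ≤ ρ(k)` since `tr(Vᵀ W V) > 0`.
-/

namespace Matrix

variable {m n l R : Type*} [Fintype m]

theorem transpose_mul_mul_submatrix_id [Fintype n] [CommSemiring R]
    (V : Matrix m n R) (A : Matrix m m R) (f : l → n) :
    (V.submatrix id f)ᵀ * A * V.submatrix id f = (Vᵀ * A * V).submatrix f f := by
  rw [submatrix_mul _ _ f id f Function.bijective_id, ← submatrix_id_id A,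
    transpose_submatrix, submatrix_mul _ _ f id id Function.bijective_id]
  rfl

theorem transpose_mul_self_submatrix_id_eq_one [Fintype n] [CommSemiring R] [DecidableEq m]
    [DecidableEq n] [DecidableEq l] {V : Matrix m n R} (hV : Vᵀ * V = 1) {f : l → n}
    (hf : Function.Injective f) :
    (V.submatrix id f)ᵀ * V.submatrix id f = 1 := by
  simpa [hV, submatrix_one f hf] using transpose_mul_mul_submatrix_id V 1 f

theorem PosDef.transpose_mul_mul_of_transpose_mul_self_eq_one [Fintype n] [DecidableEq n]
    [CommRing R] [PartialOrder R] [StarRing R] [TrivialStar R]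
    {W : Matrix m m R} (hW : W.PosDef) {V : Matrix m n R} (hV : Vᵀ * V = 1) :
    (Vᵀ * W * V).PosDef := by
  rw [← conjTranspose_eq_transpose_of_trivial]
  refine hW.conjTranspose_mul_mul_same (Function.LeftInverse.injective (g := (Vᵀ *ᵥ ·)) ?_)
  intro x
  simp only [mulVec_mulVec, hV, one_mulVec]

theorem sum_trace_submatrix_succAbove {k : ℕ} [AddCommGroup R]
    (A : Matrix (Fin (k + 1)) (Fin (k + 1)) R) :
    ∑ j : Fin (k + 1), (A.submatrix j.succAbove j.succAbove).trace = k • A.trace := by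
  have h (j : Fin (k + 1)) : (A.submatrix j.succAbove j.succAbove).trace = A.trace - A j j := by
    rw [trace, trace, Fin.sum_univ_succAbove _ j]
    simp
  simp only [h, Finset.sum_sub_distrib, Finset.sum_const, Finset.card_univ, Fintype.card_fin,
    succ_nsmul]
  exact add_sub_cancel_right _ _

end Matrix

theorem trace_ratio_optimal_value_nonincreasing_general {p : ℕ}
    (B W : Matrix (Fin p) (Fin p) ℝ) (hW : W.PosDef)
    (rho : ℕ → ℝ)
    (hrho : ∀ k, 1 ≤ k → k ≤ p →
      IsGreatest {r : ℝ | ∃ V : Matrix (Fin p) (Fin k) ℝ,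
        Vᵀ * V = 1 ∧ r = Matrix.trace (Vᵀ * B * V) / Matrix.trace (Vᵀ * W * V)}
        (rho k)) :
    ∀ k, 1 ≤ k → k + 1 ≤ p → rho (k + 1) ≤ rho k := by
  intro k hk hkp
  obtain ⟨⟨V, hV, hVrho⟩, -⟩ := hrho (k + 1) (by omega) hkp
  have : Nonempty (Fin k) := ⟨⟨0, hk⟩⟩
  have hdelete (j : Fin (k + 1)) :
      ((Vᵀ * B * V).submatrix j.succAbove j.succAbove).trace ≤
        rho k * ((Vᵀ * W * V).submatrix j.succAbove j.succAbove).trace := by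
    have hVj := transpose_mul_self_submatrix_id_eq_one hV (Fin.succAbove_right_injective (p := j))
    have hpos := (hW.transpose_mul_mul_of_transpose_mul_self_eq_one hVj).trace_pos
    rw [← transpose_mul_mul_submatrix_id, ← transpose_mul_mul_submatrix_id,
      ← div_le_iff₀ hpos]
    exact (hrho k hk (by omega)).2 ⟨_, hVj, rfl⟩
  have hsum := Finset.sum_le_sum fun j (_ : j ∈ Finset.univ) => hdelete j
  rw [← Finset.mul_sum, sum_trace_submatrix_succAbove, sum_trace_submatrix_succAbove,
    nsmul_eq_mul, nsmul_eq_mul, mul_left_comm] at hsum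
  rw [hVrho, div_le_iff₀ (hW.transpose_mul_mul_of_transpose_mul_self_eq_one hV).trace_pos]
  exact le_of_mul_le_mul_left hsum (by exact_mod_cast hk)

/-- Monotonicity of the optimal trace ratio: with `B` symmetric and `W` SPD, if
`ρ k` is the maximum of `tr(Vᵀ B V)/tr(Vᵀ W V)` over `p × k` matrices `V` with
orthonormal columns, then `ρ (k+1) ≤ ρ k` for `1 ≤ k ≤ p - 1`. -/
theorem trace_ratio_optimal_value_nonincreasing {p : ℕ}
    (B W : Matrix (Fin p) (Fin p) ℝ) (hB : B.IsSymm) (hW : W.PosDef)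
    (rho : ℕ → ℝ)
    (hrho : ∀ k, 1 ≤ k → k ≤ p →
      IsGreatest {r : ℝ | ∃ V : Matrix (Fin p) (Fin k) ℝ,
        Vᵀ * V = 1 ∧ r = Matrix.trace (Vᵀ * B * V) / Matrix.trace (Vᵀ * W * V)}
        (rho k)) :
    ∀ k, 1 ≤ k → k + 1 ≤ p → rho (k + 1) ≤ rho k :=
  trace_ratio_optimal_value_nonincreasing_general B W hW rho hrho
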